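/- arXiv:2002.11414 — 2 statements merged into one kernel-verified Lean document; each statement's English description precedes it below -/
import Mathlib

section
/- Let W and Q be probability measures with W ≪ Q, α > 1 with D_α(W‖Q) < ∞, and let W^{(α)} be the order-α tilted probability measure. Then for Λ = ln(dW/dQ), the identity ln(dW^{(α)}/dW) = D(W^{(α)}‖W) + (α−1)·(Λ − E_{W^{(α)}}[Λ]) holds W^{(α)}-almost surely. -/
/-!
On the support of the tilted measure, `W^{(α)} / W = e^{(1-α) D_α(W‖Q)} (W / Q)^{α-1}`, so
`ln (dW^{(α)}/dW) = (1-α) D_α(W‖Q) + (α-1) Λ` pointwise. Averaging this identity against the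
probability vector `W^{(α)}` gives `D(W^{(α)}‖W) = (1-α) D_α(W‖Q) + (α-1) E_{W^{(α)}}[Λ]`, and
subtracting the two eliminates the Rényi divergence.
-/

open Real BigOperators Finset

/-- A probability mass function on a finite type, represented as a real-valued function. -/
def IsPmf {Y : Type*} [Fintype Y] (p : Y → ℝ) : Prop :=
  (∀ y, 0 ≤ p y) ∧ ∑ y, p y = 1

/-- Absolute continuity for pmfs on a finite type. -/
def AbsCont {Y : Type*} [Fintype Y] (p q : Y → ℝ) : Prop :=
  ∀ y, q y = 0 → p y = 0

/-- Kullback–Leibler divergence (relative entropy). -/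
noncomputable def klD {Y : Type*} [Fintype Y] (p q : Y → ℝ) : ℝ :=
  ∑ y, p y * Real.log (p y / q y)

/-- Rényi divergence of order α (Kullback–Leibler divergence at α = 1). -/
noncomputable def renyiD {Y : Type*} [Fintype Y] (α : ℝ) (p q : Y → ℝ) : ℝ :=
  if α = 1 then klD p q
  else (α - 1)⁻¹ * Real.log (∑ y, p y ^ α * q y ^ (1 - α))

/-- The order-α tilted probability measure of p with respect to q. -/
noncomputable def tilted {Y : Type*} [Fintype Y] (α : ℝ) (p q : Y → ℝ) : Y → ℝ :=
  fun y => Real.exp ((1 - α) * renyiD α p q) * p y ^ α * q y ^ (1 - α)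

section Tilted

variable {Y : Type*} [Fintype Y]

theorem klD_eq_of_log_div_eq {r p g : Y → ℝ} {c : ℝ} (hr : ∑ y, r y = 1)
    (h : ∀ y, r y ≠ 0 → log (r y / p y) = c + g y) :
    klD r p = c + ∑ y, r y * g y := by
  have hpointwise : ∀ y, r y * log (r y / p y) = r y * c + r y * g y := by
    intro y
    by_cases hy : r y = 0
    · simp [hy]
    · rw [h y hy, mul_add]
  rw [klD, Finset.sum_congr rfl fun y _ => hpointwise y, Finset.sum_add_distrib,
    ← Finset.sum_mul, hr, one_mul]

theorem sum_rpow_mul_rpow_pos {α : ℝ} {p q : Y → ℝ} (hp : IsPmf p) (hq : ∀ y, 0 ≤ q y)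
    (hac : AbsCont p q) : 0 < ∑ y, p y ^ α * q y ^ (1 - α) := by
  obtain ⟨y₀, hy₀⟩ : ∃ y, p y ≠ 0 := by
    by_contra! h
    simpa [h] using hp.2
  have hp₀ : 0 < p y₀ := (hp.1 y₀).lt_of_ne' hy₀
  have hq₀ : 0 < q y₀ := (hq y₀).lt_of_ne' fun h => hy₀ (hac y₀ h)
  exact Finset.sum_pos' (fun y _ => by have := hp.1 y; have := hq y; positivity)
    ⟨y₀, Finset.mem_univ _, by positivity⟩

theorem exp_mul_renyiD {α : ℝ} (hα : α ≠ 1) {p q : Y → ℝ}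
    (hS : 0 < ∑ y, p y ^ α * q y ^ (1 - α)) :
    exp ((1 - α) * renyiD α p q) = (∑ y, p y ^ α * q y ^ (1 - α))⁻¹ := by
  have hα' : α - 1 ≠ 0 := sub_ne_zero.mpr hα
  have hexponent : (1 - α) * renyiD α p q = -log (∑ y, p y ^ α * q y ^ (1 - α)) := by
    rw [renyiD, if_neg hα]
    field_simp
    ring
  rw [hexponent, exp_neg, exp_log hS]

theorem sum_tilted {α : ℝ} (hα : α ≠ 1) {p q : Y → ℝ}
    (hS : 0 < ∑ y, p y ^ α * q y ^ (1 - α)) : ∑ y, tilted α p q y = 1 := by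
  simp only [tilted, mul_assoc]
  rw [← Finset.mul_sum, exp_mul_renyiD hα hS, inv_mul_cancel₀ hS.ne']

theorem pos_of_tilted_ne_zero {α : ℝ} (hα₀ : α ≠ 0) (hα₁ : α ≠ 1) {p q : Y → ℝ}
    (hp : ∀ y, 0 ≤ p y) (hq : ∀ y, 0 ≤ q y) {y : Y} (hy : tilted α p q y ≠ 0) :
    0 < p y ∧ 0 < q y := by
  have hα₁' : 1 - α ≠ 0 := sub_ne_zero.mpr hα₁.symm
  refine ⟨(hp y).lt_of_ne' fun h => hy ?_, (hq y).lt_of_ne' fun h => hy ?_⟩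
  · simp [tilted, h, zero_rpow hα₀]
  · simp [tilted, h, zero_rpow hα₁']

theorem log_tilted_div {α : ℝ} {p q : Y → ℝ} {y : Y} (hpy : 0 < p y) (hqy : 0 < q y) :
    log (tilted α p q y / p y) = (1 - α) * renyiD α p q + (α - 1) * log (p y / q y) := by
  rw [tilted, mul_assoc, mul_div_assoc, mul_comm (p y ^ α), mul_div_assoc,
    log_mul (exp_ne_zero _) (by positivity), log_exp, log_mul (by positivity) (by positivity),
    log_div (by positivity) hpy.ne', log_rpow hqy, log_rpow hpy, log_div hpy.ne' hqy.ne']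
  ring

end Tilted

/-- log-density identity for the tilted measure w.r.t. W. -/
theorem tilted_log_density_W {Y : Type*} [Fintype Y] (α : ℝ) (hα : 1 < α)
    (p q : Y → ℝ) (hp : IsPmf p) (hq : IsPmf q) (hac : AbsCont p q) :
    ∀ y, tilted α p q y ≠ 0 →
      Real.log (tilted α p q y / p y)
        = klD (tilted α p q) p
          + (α - 1) * (Real.log (p y / q y)
                  - ∑ z, tilted α p q z * Real.log (p z / q z)) := by
  have hα₀ : α ≠ 0 := (zero_lt_one.trans hα).ne'
  have hα₁ : α ≠ 1 := hα.ne'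
  have hlog : ∀ z, tilted α p q z ≠ 0 → log (tilted α p q z / p z)
      = (1 - α) * renyiD α p q + (α - 1) * log (p z / q z) := fun z hz =>
    have ⟨hpz, hqz⟩ := pos_of_tilted_ne_zero hα₀ hα₁ hp.1 hq.1 hz
    log_tilted_div hpz hqz
  have hkl := klD_eq_of_log_div_eq
    (sum_tilted hα₁ (sum_rpow_mul_rpow_pos hp hq.1 hac)) hlog
  intro y hy
  rw [hlog y hy, hkl, mul_sub, Finset.mul_sum]
  simp only [mul_left_comm (α - 1)]
  ring
end

section
/- Convergence of tilted measures: let W, Q be probability measures, W₁ the normalized absolutely continuous component of W with respect to Q (assumed nonzero), and suppose D_β(W₁‖Q) < ∞ for some β > 1. Then the order-α tilted measures W^{(α)} (defined from W₁) converge in total variation to W₁ as α ↑ 1, and D(W^{(α)}‖Q) → D(W₁‖Q) as α ↑ 1. -/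
open Real BigOperators Finset Filter Topology
open scoped Classical

/-! On a finite alphabet everything is a finite sum, so it suffices to show that
`tilted α p q → p` coordinatewise as `α → 1`; both the total variation distance to `p` and
`klD · q` are continuous functions of the first argument. Away from `α = 1` the tilted measure is
`p ^ α q ^ (1 - α)` normalised by its total mass, and each summand tends to `p y`: where `p y = 0`
it vanishes identically, and otherwise `q y ≠ 0` by absolute continuity, so both powers are
continuous in the exponent. -/

theorem Real.continuous_mul_log_div_const (c : ℝ) : Continuous fun x : ℝ => x * log (x / c) := by
  rcases eq_or_ne c 0 with rfl | hc
  -- `x / 0 = 0` and `log 0 = 0`, so the function vanishes identically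
  · simpa using continuous_const
  have hsplit : (fun x : ℝ => x * log (x / c)) = fun x => x * log x - x * log c := by
    ext x
    rcases eq_or_ne x 0 with rfl | hx
    · simp
    · rw [log_div hx hc, mul_sub]
  rw [hsplit]
  exact continuous_mul_log.sub (continuous_id.mul continuous_const)

theorem Real.tendsto_rpow_mul_rpow_one_sub {x y : ℝ} (hxy : y = 0 → x = 0) :
    Tendsto (fun a : ℝ => x ^ a * y ^ (1 - a)) (𝓝 1) (𝓝 x) := by
  rcases eq_or_ne x 0 with rfl | hx
  · refine tendsto_const_nhds.congr' ?_
    filter_upwards [eventually_ne_nhds one_ne_zero] with a ha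
    rw [zero_rpow ha, zero_mul]
  · have hy : y ≠ 0 := mt hxy hx
    have hcont : ContinuousAt (fun a : ℝ => x ^ a * y ^ (1 - a)) 1 :=
      (continuousAt_const_rpow hx).mul
        ((continuousAt_const_rpow hy).comp (continuousAt_const.sub continuousAt_id))
    simpa using hcont.tendsto

section Tilted

variable {Y : Type*} [Fintype Y]

theorem continuous_klD_left (q : Y → ℝ) : Continuous fun p : Y → ℝ => klD p q :=
  continuous_finsetSum _ fun y _ =>
    (continuous_mul_log_div_const (q y)).comp (continuous_apply y)

theorem tilted_eq_of_ne_one {α : ℝ} {p q : Y → ℝ} (hα : α ≠ 1)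
    (hpos : 0 < ∑ z, p z ^ α * q z ^ (1 - α)) (y : Y) :
    tilted α p q y = (∑ z, p z ^ α * q z ^ (1 - α))⁻¹ * (p y ^ α * q y ^ (1 - α)) := by
  have hexponent : (1 - α) * renyiD α p q = -log (∑ z, p z ^ α * q z ^ (1 - α)) := by
    have hα' : α - 1 ≠ 0 := sub_ne_zero.mpr hα
    rw [renyiD, if_neg hα]
    field_simp
    ring
  rw [tilted, hexponent, exp_neg, exp_log hpos, mul_assoc]

theorem tendsto_tilted {p q : Y → ℝ} (hpq : AbsCont p q) (hp : ∑ y, p y = 1) :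
    Tendsto (fun a : ℝ => tilted a p q) (𝓝[≠] 1) (𝓝 p) := by
  have hterm (y : Y) : Tendsto (fun a : ℝ => p y ^ a * q y ^ (1 - a)) (𝓝 1) (𝓝 (p y)) :=
    tendsto_rpow_mul_rpow_one_sub (hpq y)
  have hmass : Tendsto (fun a : ℝ => ∑ z, p z ^ a * q z ^ (1 - a)) (𝓝 1) (𝓝 1) := by
    simpa [hp] using tendsto_finsetSum univ fun z _ => hterm z
  have hformula : ∀ᶠ a in 𝓝[≠] (1 : ℝ), ∀ y, tilted a p q y =
      (∑ z, p z ^ a * q z ^ (1 - a))⁻¹ * (p y ^ a * q y ^ (1 - a)) := by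
    filter_upwards [self_mem_nhdsWithin,
      nhdsWithin_le_nhds (hmass.eventually (eventually_gt_nhds one_pos))] with a ha hpos
    exact tilted_eq_of_ne_one ha hpos
  refine tendsto_pi_nhds.2 fun y => ?_
  have hlim : Tendsto (fun a : ℝ => (∑ z, p z ^ a * q z ^ (1 - a))⁻¹ * (p y ^ a * q y ^ (1 - a)))
      (𝓝 1) (𝓝 (p y)) := by
    simpa using (hmass.inv₀ one_ne_zero).mul (hterm y)
  exact (tendsto_nhdsWithin_of_tendsto_nhds hlim).congr' (hformula.mono fun a h => (h y).symm)

end Tilted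

theorem tilted_convergence_general {Y : Type*} [Fintype Y]
    (w q : Y → ℝ)
    (m : ℝ) (hm : m = ∑ y, (if q y = 0 then 0 else w y)) (hm0 : m ≠ 0)
    (w1 : Y → ℝ) (hw1 : w1 = fun y => (if q y = 0 then 0 else w y) / m) :
    Tendsto (fun a : ℝ => ∑ y, |tilted a w1 q y - w1 y|) (𝓝[<] (1 : ℝ)) (𝓝 0)
    ∧ Tendsto (fun a : ℝ => klD (tilted a w1 q) q) (𝓝[<] (1 : ℝ))
        (𝓝 (klD w1 q)) := by
  have hac : AbsCont w1 q := fun y hy => by simp [hw1, hy]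
  have hsum : ∑ y, w1 y = 1 := by rw [hw1, ← sum_div, ← hm, div_self hm0]
  have hlim : Tendsto (fun a : ℝ => tilted a w1 q) (𝓝[<] 1) (𝓝 w1) :=
    (tendsto_tilted hac hsum).mono_left (nhdsWithin_mono _ fun a (ha : a < 1) => ha.ne)
  have htv : Continuous fun p : Y → ℝ => ∑ y, |p y - w1 y| := by fun_prop
  refine ⟨?_, (continuous_klD_left q).continuousAt.tendsto.comp hlim⟩
  simpa [Function.comp_def] using htv.continuousAt.tendsto.comp hlim

/-- convergence of the tilted measures as the order increases to one. -/
theorem tilted_convergence {Y : Type*} [Fintype Y]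
    (w q : Y → ℝ) (hw : IsPmf w) (hq : IsPmf q)
    (m : ℝ) (hm : m = ∑ y, (if q y = 0 then 0 else w y)) (hm0 : m ≠ 0)
    (w1 : Y → ℝ) (hw1 : w1 = fun y => (if q y = 0 then 0 else w y) / m)
    (β : ℝ) (hβ : 1 < β) :
    Tendsto (fun a : ℝ => ∑ y, |tilted a w1 q y - w1 y|) (𝓝[<] (1 : ℝ)) (𝓝 0)
    ∧ Tendsto (fun a : ℝ => klD (tilted a w1 q) q) (𝓝[<] (1 : ℝ))
        (𝓝 (klD w1 q)) :=
  tilted_convergence_general w q m hm hm0 w1 hw1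
end
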